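/- Let D ⪰ 0, D ≠ 0, Σ̂ ≻ 0, ρ > 0, and let γ* be the unique solution in (λ_max(D), ∞) of ρ^2 = ⟨Σ̂, (I_d - γ*(γ* I_d - D)^{-1})^2⟩. If λ_1 = λ_max(D) and v_1 is a corresponding normalized eigenvector, then λ_1(1 + sqrt(v_1^T Σ̂ v_1)/ρ) ≤ γ* ≤ λ_1(1 + sqrt(Tr[Σ̂])/ρ). -/

import Mathlib

open Matrix
noncomputable section
open scoped Classical

/-- Positive semidefinite square root (0 if not PSD). -/
def psdSqrt {d : ℕ} (A : Matrix (Fin d) (Fin d) ℝ) : Matrix (Fin d) (Fin d) ℝ :=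
  if h : A.PosSemidef then
    (h.1.eigenvectorUnitary : Matrix (Fin d) (Fin d) ℝ) *
      diagonal ((↑) ∘ (Real.sqrt ∘ h.1.eigenvalues)) *
      (star (h.1.eigenvectorUnitary : Matrix (Fin d) (Fin d) ℝ))
  else 0

/-- Frobenius norm. -/
def frob {d : ℕ} (A : Matrix (Fin d) (Fin d) ℝ) : ℝ := Real.sqrt (Aᵀ * A).trace

/-- Trace inner product. -/
def ip {d : ℕ} (A B : Matrix (Fin d) (Fin d) ℝ) : ℝ := (Aᵀ * B).trace

/-- Largest eigenvalue of a symmetric matrix (0 if not symmetric). -/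
def lamMax {d : ℕ} (A : Matrix (Fin d) (Fin d) ℝ) : ℝ :=
  if h : A.IsHermitian then ⨆ i, h.eigenvalues i else 0

/-- Smallest eigenvalue of a symmetric matrix (0 if not symmetric). -/
def lamMin {d : ℕ} (A : Matrix (Fin d) (Fin d) ℝ) : ℝ :=
  if h : A.IsHermitian then ⨅ i, h.eigenvalues i else 0

/-- Gelbrich distance between two mean–covariance pairs. -/
def gelbrich {d : ℕ} (μ₁ μ₂ : EuclideanSpace ℝ (Fin d))
    (S₁ S₂ : Matrix (Fin d) (Fin d) ℝ) : ℝ :=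
  Real.sqrt (‖μ₁ - μ₂‖ ^ 2 + (S₁ + S₂ - 2 • psdSqrt (psdSqrt S₂ * S₁ * psdSqrt S₂)).trace)

private lemma le_of_sq_le_sq' {a b : ℝ} (ha : 0 ≤ a) (hb : 0 ≤ b) (h : a ^ 2 ≤ b ^ 2) :
    a ≤ b := by nlinarith

set_option maxHeartbeats 1000000 in
/-- Bounds on the optimal dual multiplier `γ*`. -/
theorem dual_multiplier_bounds {d : ℕ} (D Shat : Matrix (Fin d) (Fin d) ℝ)
    (hD : D.PosSemidef) (hD0 : D ≠ 0) (hShat : Shat.PosDef) (ρ : ℝ) (hρ : 0 < ρ)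
    (γstar : ℝ) (hγstar : lamMax D < γstar)
    (heq : ρ ^ 2 = ip Shat
        (((1 : Matrix (Fin d) (Fin d) ℝ)
            - γstar • (γstar • (1 : Matrix (Fin d) (Fin d) ℝ) - D)⁻¹) ^ 2))
    (v₁ : Fin d → ℝ) (hv₁ : D.mulVec v₁ = lamMax D • v₁) (hv₁norm : v₁ ⬝ᵥ v₁ = 1) :
    lamMax D * (1 + Real.sqrt (v₁ ⬝ᵥ Shat.mulVec v₁) / ρ) ≤ γstar ∧
    γstar ≤ lamMax D * (1 + Real.sqrt Shat.trace / ρ) := by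
  classical
  -- dispatch the degenerate case d = 0
  rcases Nat.eq_zero_or_pos d with hd | hd
  · exfalso
    subst hd
    simp [dotProduct] at hv₁norm
  have hne : Nonempty (Fin d) := ⟨⟨0, hd⟩⟩
  -- notation
  set γ : ℝ := γstar with hγdef
  set L : ℝ := lamMax D with hLdef
  set U : Matrix (Fin d) (Fin d) ℝ := (hD.1.eigenvectorUnitary : Matrix (Fin d) (Fin d) ℝ)
    with hU
  set lam : Fin d → ℝ := hD.1.eigenvalues with hlam
  have hLsup : L = ⨆ i, lam i := by
    rw [hLdef, lamMax, dif_pos hD.1]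
  have hlamle : ∀ i, lam i ≤ L := by
    intro i
    rw [hLsup]
    exact le_ciSup (Set.Finite.bddAbove (Set.finite_range lam)) i
  have hlamnn : ∀ i, 0 ≤ lam i := fun i => hD.eigenvalues_nonneg i
  have hLnn : 0 ≤ L := le_trans (hlamnn ⟨0, hd⟩) (hlamle ⟨0, hd⟩)
  have hγL : 0 < γ - L := sub_pos.mpr hγstar
  have hγnn : 0 ≤ γ := le_trans hLnn (le_of_lt hγstar)
  have htpos : ∀ i, (0:ℝ) < γ - lam i := fun i => sub_pos.mpr (lt_of_le_of_lt (hlamle i) hγstar)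
  -- unitary facts
  have hUU : U * Uᵀ = 1 := by
    have := mem_unitaryGroup_iff.mp hD.1.eigenvectorUnitary.2
    rwa [star_eq_conjTranspose, conjTranspose_eq_transpose_of_trivial] at this
  have hUU' : Uᵀ * U = 1 := by
    have := mem_unitaryGroup_iff'.mp hD.1.eigenvectorUnitary.2
    rwa [star_eq_conjTranspose, conjTranspose_eq_transpose_of_trivial] at this
  have hspec : D = U * diagonal lam * Uᵀ := by
    have := hD.1.spectral_theorem
    rwa [Unitary.conjStarAlgAut_apply, RCLike.ofReal_real_eq_id, Function.id_comp, star_eq_conjTranspose, conjTranspose_eq_transpose_of_trivial] at this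
  -- diagonalization of the resolvent expression
  have hsmul : U * (γ • (1 : Matrix (Fin d) (Fin d) ℝ)) * Uᵀ = γ • 1 := by
    rw [Matrix.mul_smul, Matrix.mul_one, Matrix.smul_mul, hUU]
  have hd2 : diagonal (fun i => γ - lam i)
      = γ • (1 : Matrix (Fin d) (Fin d) ℝ) - diagonal lam := by
    ext i j; by_cases h : i = j <;> simp [h, Matrix.one_apply, diagonal]
  have hA0 : γ • (1 : Matrix (Fin d) (Fin d) ℝ) - D
      = U * diagonal (fun i => γ - lam i) * Uᵀ := by
    rw [hd2, Matrix.mul_sub, Matrix.sub_mul, hsmul, ← hspec]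
  have hAinv : (γ • (1 : Matrix (Fin d) (Fin d) ℝ) - D)⁻¹
      = U * diagonal (fun i => (γ - lam i)⁻¹) * Uᵀ := by
    apply inv_eq_right_inv
    rw [hA0]
    calc U * diagonal (fun i => γ - lam i) * Uᵀ * (U * diagonal (fun i => (γ - lam i)⁻¹) * Uᵀ)
        = U * (diagonal (fun i => γ - lam i) * (Uᵀ * U)
            * diagonal (fun i => (γ - lam i)⁻¹)) * Uᵀ := by
          simp only [Matrix.mul_assoc]
      _ = 1 := by
          rw [hUU', Matrix.mul_one, diagonal_mul_diagonal]
          have : (fun i => (γ - lam i) * (γ - lam i)⁻¹) = fun _ => (1:ℝ) := by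
            funext i; exact mul_inv_cancel₀ (htpos i).ne'
          rw [this, diagonal_one, Matrix.mul_one, hUU]
  have hN : (1 : Matrix (Fin d) (Fin d) ℝ) - γ • (γ • (1 : Matrix (Fin d) (Fin d) ℝ) - D)⁻¹
      = U * diagonal (fun i => 1 - γ * (γ - lam i)⁻¹) * Uᵀ := by
    have h1 : (1 : Matrix (Fin d) (Fin d) ℝ) = U * (1 : Matrix (Fin d) (Fin d) ℝ) * Uᵀ := by
      rw [Matrix.mul_one, hUU]
    have hd3 : diagonal (fun i => 1 - γ * (γ - lam i)⁻¹)
        = (1 : Matrix (Fin d) (Fin d) ℝ) - γ • diagonal (fun i => (γ - lam i)⁻¹) := by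
      ext i j; by_cases h : i = j <;> simp [h, Matrix.one_apply, diagonal]
    rw [hAinv, hd3, Matrix.mul_sub, Matrix.sub_mul, ← h1, Matrix.mul_smul, Matrix.smul_mul]
  set g : Fin d → ℝ := fun i => (1 - γ * (γ - lam i)⁻¹) ^ 2 with hg
  have hNsq : ((1 : Matrix (Fin d) (Fin d) ℝ)
        - γ • (γ • (1 : Matrix (Fin d) (Fin d) ℝ) - D)⁻¹) ^ 2
      = U * diagonal g * Uᵀ := by
    rw [hN, pow_two]
    calc (U * diagonal (fun i => 1 - γ * (γ - lam i)⁻¹) * Uᵀ)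
          * (U * diagonal (fun i => 1 - γ * (γ - lam i)⁻¹) * Uᵀ)
        = U * (diagonal (fun i => 1 - γ * (γ - lam i)⁻¹) * (Uᵀ * U)
            * diagonal (fun i => 1 - γ * (γ - lam i)⁻¹)) * Uᵀ := by
          simp only [Matrix.mul_assoc]
      _ = U * diagonal g * Uᵀ := by
          rw [hUU', Matrix.mul_one, diagonal_mul_diagonal]
          have : (fun i => (1 - γ * (γ - lam i)⁻¹) * (1 - γ * (γ - lam i)⁻¹)) = g := by
            funext i; simp only [hg]; ring
          rw [this]
  -- factor Shat
  obtain ⟨B, hB⟩ : ∃ B : Matrix (Fin d) (Fin d) ℝ, Shat = Bᴴ * B := by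
    open scoped MatrixOrder in
    exact CStarAlgebra.nonneg_iff_eq_star_mul_self.mp hShat.posSemidef.nonneg
  rw [conjTranspose_eq_transpose_of_trivial] at hB
  set C : Matrix (Fin d) (Fin d) ℝ := B * U with hC
  set w : Fin d → ℝ := Uᵀ *ᵥ v₁ with hw
  set s : Fin d → ℝ := fun i => ∑ k, (C k i)^2 with hs
  have hSh : Shatᵀ = Shat := by
    rw [← conjTranspose_eq_transpose_of_trivial]
    exact hShat.1
  -- the basic sum expression for ρ²
  have hip : ip Shat (U * diagonal g * Uᵀ) = ∑ i, s i * g i := by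
    rw [ip, hSh]
    have h1 : Shat * (U * diagonal g * Uᵀ) = (Shat * U * diagonal g) * Uᵀ := by
      simp only [Matrix.mul_assoc]
    rw [h1, Matrix.trace_mul_comm, ← Matrix.mul_assoc, ← Matrix.mul_assoc, hB]
    have h2 : Uᵀ * (Bᵀ * B) * U = Cᵀ * C := by
      rw [hC, transpose_mul]; simp only [Matrix.mul_assoc]
    rw [h2, Matrix.trace]
    apply Finset.sum_congr rfl
    intro i _
    rw [Matrix.diag, Matrix.mul_diagonal]
    congr 1
    rw [Matrix.mul_apply, hs]
    apply Finset.sum_congr rfl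
    intro k _
    rw [transpose_apply, sq]
  have heq' : ρ ^ 2 = ∑ i, s i * g i := by rw [heq, hNsq, hip]
  have hsnn : ∀ i, 0 ≤ s i := fun i => Finset.sum_nonneg fun k _ => sq_nonneg _
  have hgnn : ∀ i, 0 ≤ g i := fun i => sq_nonneg _
  -- trace of Shat
  have hT : Shat.trace = ∑ i, s i := by
    have h3 : Cᵀ * C = Uᵀ * (Bᵀ * B) * U := by
      rw [hC, transpose_mul]; simp only [Matrix.mul_assoc]
    have h4 : (Cᵀ * C).trace = Shat.trace := by
      rw [h3, Matrix.trace_mul_comm, hB]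
      have : U * (Uᵀ * (Bᵀ * B)) = (U * Uᵀ) * (Bᵀ * B) := by simp only [Matrix.mul_assoc]
      rw [this, hUU, Matrix.one_mul]
    rw [← h4, Matrix.trace]
    apply Finset.sum_congr rfl
    intro i _
    rw [Matrix.diag, Matrix.mul_apply, hs]
    apply Finset.sum_congr rfl
    intro k _
    rw [transpose_apply, sq]
  have hTnn : 0 ≤ Shat.trace := by
    rw [hT]; exact Finset.sum_nonneg fun i _ => hsnn i
  -- g in closed form
  have hgeq : ∀ i, g i = (lam i)^2 / (γ - lam i)^2 := by
    intro i
    have hne' : γ - lam i ≠ 0 := (htpos i).ne'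
    have h5 : 1 - γ * (γ - lam i)⁻¹ = -(lam i) / (γ - lam i) := by
      field_simp
      ring
    simp only [hg]
    rw [h5, div_pow, neg_sq]
  -- upper bound on each g i
  have hkey_up : ∀ i, g i * (γ - L)^2 ≤ L^2 := by
    intro i
    rw [hgeq i, div_mul_eq_mul_div, div_le_iff₀ (pow_pos (htpos i) 2)]
    have h6 : lam i * (γ - L) ≤ L * (γ - lam i) := by nlinarith [mul_nonneg (sub_nonneg.2 (hlamle i)) hγnn]
    have h7 : (lam i * (γ - L))^2 ≤ (L * (γ - lam i))^2 :=
      pow_le_pow_left₀ (mul_nonneg (hlamnn i) hγL.le) h6 2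
    calc lam i ^2 * (γ - L)^2 = (lam i * (γ - L))^2 := by ring
      _ ≤ (L * (γ - lam i))^2 := h7
      _ = L^2 * (γ - lam i)^2 := by ring
  -- UPPER BOUND on γ
  have hup : γ ≤ L * (1 + Real.sqrt Shat.trace / ρ) := by
    have h8 : ρ^2 * (γ - L)^2 ≤ Shat.trace * L^2 := by
      rw [heq', hT]
      calc (∑ i, s i * g i) * (γ - L)^2 = ∑ i, s i * (g i * (γ - L)^2) := by
            rw [Finset.sum_mul]; exact Finset.sum_congr rfl fun i _ => by ring
        _ ≤ ∑ i, s i * L^2 :=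
            Finset.sum_le_sum fun i _ => mul_le_mul_of_nonneg_left (hkey_up i) (hsnn i)
        _ = (∑ i, s i) * L^2 := (Finset.sum_mul _ _ _).symm
    have h9 : (ρ * (γ - L))^2 ≤ (L * Real.sqrt Shat.trace)^2 := by
      rw [mul_pow, mul_pow, Real.sq_sqrt hTnn, mul_comm (L^2) Shat.trace]
      exact h8
    have h10 : ρ * (γ - L) ≤ L * Real.sqrt Shat.trace :=
      le_of_sq_le_sq' (mul_nonneg hρ.le hγL.le)
        (mul_nonneg hLnn (Real.sqrt_nonneg _)) h9
    have h11 : γ - L ≤ L * Real.sqrt Shat.trace / ρ := by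
      rw [le_div_iff₀ hρ, mul_comm]
      exact h10
    have h12 : L * (1 + Real.sqrt Shat.trace / ρ) = L + L * Real.sqrt Shat.trace / ρ := by
      ring
    linarith only [h11, h12]
  -- eigen-relation for w : support of w has eigenvalue L
  have hv1w : U *ᵥ w = v₁ := by
    rw [hw, mulVec_mulVec, hUU, one_mulVec]
  have hweig : ∀ i, lam i * w i = L * w i := by
    intro i
    have h13 : Uᵀ *ᵥ (D *ᵥ v₁) = diagonal lam *ᵥ w := by
      rw [mulVec_mulVec, hspec]
      have : Uᵀ * (U * diagonal lam * Uᵀ) = (Uᵀ * U) * diagonal lam * Uᵀ := by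
        simp only [Matrix.mul_assoc]
      rw [this, hUU', Matrix.one_mul, ← mulVec_mulVec, hw]
    have h14 : Uᵀ *ᵥ (D *ᵥ v₁) = L • w := by
      rw [hv₁, mulVec_smul, hw]
    have := h13.symm.trans h14
    have h15 := congrFun this i
    simpa [mulVec_diagonal] using h15
  have hwsupp : ∀ i, w i ≠ 0 → lam i = L := by
    intro i hwi
    exact mul_right_cancel₀ hwi (hweig i)
  have hw1 : ∑ i, (w i)^2 = 1 := by
    have : w ⬝ᵥ w = 1 := by
      rw [hw, dotProduct_mulVec, vecMul_transpose, mulVec_mulVec, hUU, one_mulVec, hv₁norm]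
    simpa [dotProduct, sq] using this
  -- quadratic form as a sum of squares
  have hQ : v₁ ⬝ᵥ Shat *ᵥ v₁ = ∑ k, ((C *ᵥ w) k)^2 := by
    rw [hB, ← mulVec_mulVec, dotProduct_mulVec, vecMul_transpose, ← hv1w, mulVec_mulVec, ← hC]
    simp [dotProduct, sq]
  have hQnn : 0 ≤ v₁ ⬝ᵥ Shat *ᵥ v₁ := by
    rw [hQ]; exact Finset.sum_nonneg fun k _ => sq_nonneg _
  -- LOWER BOUND
  set F : Finset (Fin d) := Finset.univ.filter (fun i => w i ≠ 0) with hF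
  have hQle : v₁ ⬝ᵥ Shat *ᵥ v₁ ≤ ∑ i ∈ F, s i := by
    rw [hQ]
    have hk : ∀ k, ((C *ᵥ w) k)^2 ≤ ∑ i ∈ F, (C k i)^2 := by
      intro k
      have hrw : (C *ᵥ w) k = ∑ i ∈ F, C k i * w i := by
        rw [mulVec, dotProduct, hF]
        rw [Finset.sum_filter]
        apply Finset.sum_congr rfl
        intro i _
        by_cases h : w i = 0
        · simp [h]
        · simp [h]
      have hcs := Finset.sum_mul_sq_le_sq_mul_sq F (fun i => C k i) (fun i => w i)
      have hwF : ∑ i ∈ F, (w i)^2 ≤ 1 := by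
        rw [← hw1]
        exact Finset.sum_le_sum_of_subset_of_nonneg (Finset.filter_subset _ _)
          (fun i _ _ => sq_nonneg _)
      calc ((C *ᵥ w) k)^2 = (∑ i ∈ F, C k i * w i)^2 := by rw [hrw]
        _ ≤ (∑ i ∈ F, (C k i)^2) * (∑ i ∈ F, (w i)^2) := hcs
        _ ≤ (∑ i ∈ F, (C k i)^2) * 1 := by
            apply mul_le_mul_of_nonneg_left hwF
            exact Finset.sum_nonneg fun i _ => sq_nonneg _
        _ = ∑ i ∈ F, (C k i)^2 := mul_one _
    calc ∑ k, ((C *ᵥ w) k)^2 ≤ ∑ k, ∑ i ∈ F, (C k i)^2 :=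
          Finset.sum_le_sum fun k _ => hk k
      _ = ∑ i ∈ F, ∑ k, (C k i)^2 := Finset.sum_comm
      _ = ∑ i ∈ F, s i := rfl
  have hgF : ∀ i ∈ F, g i * (γ - L)^2 = L^2 := by
    intro i hi
    have hwi : w i ≠ 0 := (Finset.mem_filter.mp hi).2
    rw [hgeq i, hwsupp i hwi, div_mul_cancel₀]
    exact (pow_pos hγL 2).ne'
  have hlow0 : L^2 * (v₁ ⬝ᵥ Shat *ᵥ v₁) ≤ ρ^2 * (γ - L)^2 := by
    calc L^2 * (v₁ ⬝ᵥ Shat *ᵥ v₁) ≤ L^2 * ∑ i ∈ F, s i :=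
          mul_le_mul_of_nonneg_left hQle (sq_nonneg _)
      _ = ∑ i ∈ F, s i * (g i * (γ - L)^2) := by
          rw [Finset.mul_sum]
          apply Finset.sum_congr rfl
          intro i hi
          rw [hgF i hi]; ring
      _ ≤ ∑ i, s i * (g i * (γ - L)^2) := by
          apply Finset.sum_le_sum_of_subset_of_nonneg (Finset.filter_subset _ _)
          intro i _ _
          exact mul_nonneg (hsnn i) (mul_nonneg (hgnn i) (sq_nonneg _))
      _ = (∑ i, s i * g i) * (γ - L)^2 := by
          rw [Finset.sum_mul]; exact Finset.sum_congr rfl fun i _ => by ring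
      _ = ρ^2 * (γ - L)^2 := by rw [heq']
  have hlow : L * (1 + Real.sqrt (v₁ ⬝ᵥ Shat *ᵥ v₁) / ρ) ≤ γ := by
    have h16 : (L * Real.sqrt (v₁ ⬝ᵥ Shat *ᵥ v₁))^2 ≤ (ρ * (γ - L))^2 := by
      rw [mul_pow, mul_pow, Real.sq_sqrt hQnn]
      exact hlow0
    have h17 : L * Real.sqrt (v₁ ⬝ᵥ Shat *ᵥ v₁) ≤ ρ * (γ - L) :=
      le_of_sq_le_sq' (mul_nonneg hLnn (Real.sqrt_nonneg _))
        (mul_nonneg hρ.le hγL.le) h16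
    have h18 : L * Real.sqrt (v₁ ⬝ᵥ Shat *ᵥ v₁) / ρ ≤ γ - L := by
      rw [div_le_iff₀ hρ, mul_comm (γ - L) ρ]
      exact h17
    have h19 : L * (1 + Real.sqrt (v₁ ⬝ᵥ Shat *ᵥ v₁) / ρ)
        = L + L * Real.sqrt (v₁ ⬝ᵥ Shat *ᵥ v₁) / ρ := by ring
    linarith only [h18, h19]
  exact ⟨hlow, hup⟩
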